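/- arXiv:1710.08296 — 2 statements merged into one kernel-verified Lean document; each statement's English description precedes it below -/
import Mathlib

section
/- Let G be an acyclic directed graph and let (u₁,v₁), (u₂,v₂) be two edges such that adding both to G creates a cycle, but adding either one alone keeps the graph acyclic. Then in G there is a path from v₁ to u₂ and a path from v₂ to u₁. -/
/-!
A cycle through a newly added edge `u → v` yields a path `v →* u`, and the first visit of that
path to `u` does not use the new edge. A cycle in `E + e₁ + e₂` must use `e₁`, since `E + e₂` is
acyclic, so it gives a path `v₁ →* u₁` in `E + e₂`. That path must use `e₂`, since otherwise
`e₁` closes it to a cycle of `E + e₁`; its part before the first use of `e₂` is an `E`-path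
`v₁ →* u₂`. The second path follows by symmetry.
-/

namespace Relation

variable {V : Type*} {r : V → V → Prop} {u v : V}

theorem ReflTransGen.split_at_edge {a b : V}
    (h : ReflTransGen (fun x y => r x y ∨ (x = u ∧ y = v)) a b) :
    ReflTransGen r a b ∨
      (ReflTransGen r a u ∧ ReflTransGen (fun x y => r x y ∨ (x = u ∧ y = v)) v b) := by
  induction h using ReflTransGen.head_induction_on with
  | refl => exact .inl .refl
  | head hac hcb ih =>
    rcases hac with hac | ⟨rfl, rfl⟩
    · exact ih.imp (.head hac) fun ⟨hcu, hvb⟩ => ⟨.head hac hcu, hvb⟩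
    · exact .inr ⟨.refl, hcb⟩

theorem ReflTransGen.avoid_edge_into_source {a : V}
    (h : ReflTransGen (fun x y => r x y ∨ (x = u ∧ y = v)) a u) : ReflTransGen r a u :=
  h.split_at_edge.elim id And.left

theorem reflTransGen_of_cycle_through_edge (hr : ∀ w, ¬ TransGen r w w) {w : V}
    (hw : TransGen (fun x y => r x y ∨ (x = u ∧ y = v)) w w) : ReflTransGen r v u := by
  obtain ⟨c, hwc, hcw⟩ := TransGen.head'_iff.mp hw
  suffices hvu : ReflTransGen (fun x y => r x y ∨ (x = u ∧ y = v)) v u from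
    hvu.avoid_edge_into_source
  rcases hwc with hwc | ⟨rfl, rfl⟩
  · rcases hcw.split_at_edge with hcw | ⟨hcu, hvw⟩
    · exact absurd (TransGen.head' hwc hcw) (hr w)
    · exact hvw.trans (.head (.inl hwc) (ReflTransGen.mono (fun _ _ => .inl) _ _ hcu))
  · exact hcw

end Relation

open Relation in
theorem reflTransGen_of_false_positive {V : Type*} (E : V → V → Prop) (u₁ v₁ u₂ v₂ : V)
    (hboth : ∃ w, TransGen
      (fun x y => (E x y ∨ (x = u₂ ∧ y = v₂)) ∨ (x = u₁ ∧ y = v₁)) w w)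
    (h1 : ∀ w, ¬ TransGen (fun x y => E x y ∨ (x = u₁ ∧ y = v₁)) w w)
    (h2 : ∀ w, ¬ TransGen (fun x y => E x y ∨ (x = u₂ ∧ y = v₂)) w w) :
    ReflTransGen E v₁ u₂ := by
  obtain ⟨w, hw⟩ := hboth
  rcases (reflTransGen_of_cycle_through_edge h2 hw).split_at_edge with hvu | ⟨hvu, -⟩
  · exact absurd (TransGen.head' (.inr ⟨rfl, rfl⟩) (ReflTransGen.mono (fun _ _ => .inl) _ _ hvu)) (h1 u₁)
  · exact hvu

theorem false_positive_paths_general {V : Type*} (E : V → V → Prop) (u₁ v₁ u₂ v₂ : V)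
    (hboth : ∃ w, Relation.TransGen
      (fun x y => E x y ∨ (x = u₁ ∧ y = v₁) ∨ (x = u₂ ∧ y = v₂)) w w)
    (h1 : ∀ w, ¬ Relation.TransGen (fun x y => E x y ∨ (x = u₁ ∧ y = v₁)) w w)
    (h2 : ∀ w, ¬ Relation.TransGen (fun x y => E x y ∨ (x = u₂ ∧ y = v₂)) w w) :
    Relation.ReflTransGen E v₁ u₂ ∧ Relation.ReflTransGen E v₂ u₁ :=
  ⟨reflTransGen_of_false_positive E u₁ v₁ u₂ v₂
      (hboth.imp fun _ => Relation.TransGen.mono (fun _ _ h => by tauto) _ _) h1 h2,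
    reflTransGen_of_false_positive E u₂ v₂ u₁ v₁
      (hboth.imp fun _ => Relation.TransGen.mono (fun _ _ h => by tauto) _ _) h2 h1⟩

theorem false_positive_paths {V : Type*} (E : V → V → Prop) (u₁ v₁ u₂ v₂ : V)
    (hacyc : ∀ w, ¬ Relation.TransGen E w w)
    (hboth : ∃ w, Relation.TransGen
      (fun x y => E x y ∨ (x = u₁ ∧ y = v₁) ∨ (x = u₂ ∧ y = v₂)) w w)
    (h1 : ∀ w, ¬ Relation.TransGen (fun x y => E x y ∨ (x = u₁ ∧ y = v₁)) w w)
    (h2 : ∀ w, ¬ Relation.TransGen (fun x y => E x y ∨ (x = u₂ ∧ y = v₂)) w w) :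
    Relation.ReflTransGen E v₁ u₂ ∧ Relation.ReflTransGen E v₂ u₁ :=
  false_positive_paths_general E u₁ v₁ u₂ v₂ hboth h1 h2
end

section
/- If a relation E' extends a relation E by exactly one pair (u,v), and the transitive closure of E' relates some vertex w to itself while the transitive closure of E is irreflexive, then the transitive closure of E' relates v to u via a chain whose first step can be taken in E ∪ {(u,v)}, and in fact ReflTransGen E v u holds. -/
/-! Every `E'`-path either avoids the new edge `(u, v)`, and so is an `E`-path, or can be cut at
its first and last uses of that edge into an `E`-path to `u` and an `E`-path from `v`.
An `E'`-cycle cannot avoid the edge because `E` is acyclic, so its remainder runs from `v` to `u`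
in `E`. -/

namespace Relation

variable {α : Type*} {r r' : α → α → Prop} {u v : α}

theorem TransGen.or_reflTransGen_of_le_or_edge (hr' : ∀ x y, r' x y → r x y ∨ x = u ∧ y = v)
    {x y : α} (h : TransGen r' x y) :
    TransGen r x y ∨ ReflTransGen r x u ∧ ReflTransGen r v y := by
  induction h with
  | single hxy =>
    rcases hr' _ _ hxy with hxy | ⟨rfl, rfl⟩
    · exact .inl (.single hxy)
    · exact .inr ⟨.refl, .refl⟩
  | tail _ hyz ih =>
    rcases hr' _ _ hyz with hyz | ⟨rfl, rfl⟩
    · exact ih.imp (·.tail hyz) (And.imp_right (·.tail hyz))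
    · have hxu : ReflTransGen r _ _ := ih.elim TransGen.to_reflTransGen And.left
      exact .inr ⟨hxu, .refl⟩

end Relation

theorem new_cycle_decomposition {V : Type*} (E E' : V → V → Prop) (u v : V)
    (hE' : ∀ x y, E' x y ↔ (E x y ∨ (x = u ∧ y = v)))
    (hacyc : ∀ w, ¬ Relation.TransGen E w w)
    (hcyc : ∃ w, Relation.TransGen E' w w) :
    Relation.ReflTransGen E v u := by
  obtain ⟨w, hw⟩ := hcyc
  rcases hw.or_reflTransGen_of_le_or_edge (fun x y => (hE' x y).1) with hE | ⟨hwu, hvw⟩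
  · exact absurd hE (hacyc w)
  · exact hvw.trans hwu
end
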